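/- Let p(x) = exp(-g(x))/Z be a log-concave probability density on ℝ (dimension n = 1) with g convex attaining its minimum at x̂. Then E[g(x)] ≤ g(x̂) + 1. -/

import Mathlib

/-!
For `0 < β < 1`, convexity gives `g (β • x + (1 - β) • y) ≤ β g x + (1 - β) g y`; after the
change of variables `x ↦ β • x + (1 - β) • y` this bounds `F β = ∫ exp (-β g)` by
`β⁻ⁿ exp ((1 - β) g y) F 1`. On the other hand `1 + u ≤ exp u` gives
`F β - F 1 ≥ (1 - β) ∫ g exp (-g)`. Dividing by `1 - β` and letting `β → 1⁻` turns the
upper bound into its derivative at `1`, giving `∫ g exp (-g) ≤ (g y + n) ∫ exp (-g)`.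
-/

open MeasureTheory Real Filter Topology Module Set

lemma mul_mul_exp_neg_le_exp_neg_mul_sub_exp_neg (β t : ℝ) :
    (1 - β) * (t * exp (-t)) ≤ exp (-(β * t)) - exp (-t) := by
  have hfactor : exp (-(β * t)) = exp (-t) * exp ((1 - β) * t) := by
    rw [← exp_add]; ring_nf
  nlinarith [add_one_le_exp ((1 - β) * t), exp_pos (-t)]

lemma HasDerivAt.le_neg_of_eventually_mul_sub_le {f : ℝ → ℝ} {d a A : ℝ} (hf : HasDerivAt f d a)
    (h : ∀ᶠ x in 𝓝[<] a, A * (a - x) ≤ f x - f a) : A ≤ -d := by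
  have hslope : Tendsto (fun x => -slope f a x) (𝓝[<] a) (𝓝 (-d)) :=
    ((hasDerivAt_iff_tendsto_slope.1 hf).mono_left (nhdsWithin_mono _ fun _ hx => ne_of_lt hx)).neg
  refine ge_of_tendsto hslope ?_
  filter_upwards [h, self_mem_nhdsWithin] with x hx (hxa : x < a)
  rw [slope_def_field, ← div_neg, neg_sub, le_div_iff₀ (sub_pos.2 hxa)]
  exact hx

lemma hasDerivAt_exp_mul_div_pow (m : ℝ) (n : ℕ) :
    HasDerivAt (fun β => exp ((1 - β) * m) / β ^ n) (-(m + n)) 1 := by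
  have hexp : HasDerivAt (fun β => exp ((1 - β) * m)) (-m) 1 := by
    simpa using (((hasDerivAt_id (1 : ℝ)).const_sub 1).mul_const m).exp
  refine (hexp.div (hasDerivAt_pow n 1) (by simp)).congr_deriv ?_
  simp only [sub_self, zero_mul, exp_zero, one_pow, mul_one]
  ring

lemma ConvexOn.exp_neg_mul_le {E : Type*} [AddCommGroup E] [Module ℝ E] {g : E → ℝ}
    (hg : ConvexOn ℝ univ g) {β : ℝ} (hβ₀ : 0 ≤ β) (hβ₁ : β ≤ 1) (x y : E) :
    exp (-(β * g x)) ≤ exp ((1 - β) * g y) * exp (-g (β • x + (1 - β) • y)) := by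
  have hconv := hg.2 (mem_univ x) (mem_univ y) hβ₀ (sub_nonneg.2 hβ₁) (add_sub_cancel β 1)
  rw [smul_eq_mul, smul_eq_mul] at hconv
  rw [← exp_add, exp_le_exp]
  linarith

section AddHaar

variable {E : Type*} [NormedAddCommGroup E] [NormedSpace ℝ E] [MeasurableSpace E] [BorelSpace E]
  [FiniteDimensional ℝ E] (μ : Measure E) [μ.IsAddHaarMeasure]

lemma integral_comp_smul_add_of_nonneg (f : E → ℝ) {β : ℝ} (hβ : 0 ≤ β) (c : E) :
    ∫ x, f (β • x + c) ∂μ = (β ^ finrank ℝ E)⁻¹ * ∫ x, f x ∂μ := by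
  rw [Measure.integral_comp_smul_of_nonneg μ (fun y => f (y + c)) β (hR := hβ),
    integral_add_right_eq_self, smul_eq_mul]

variable {μ} {g : E → ℝ}

lemma ConvexOn.integrable_exp_neg_mul (hg : ConvexOn ℝ univ g)
    (hexp : Integrable (fun x => exp (-g x)) μ) {β : ℝ} (hβ₀ : 0 < β) (hβ₁ : β ≤ 1) :
    Integrable (fun x => exp (-(β * g x))) μ := by
  have hmeas : AEStronglyMeasurable (fun x => exp (-(β * g x))) μ := by
    have hrpow : (fun x => exp (-(β * g x))) = fun x => exp (-g x) ^ β := by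
      ext x; rw [← exp_mul]; ring_nf
    rw [hrpow]
    exact (hexp.aemeasurable.pow_const β).aestronglyMeasurable
  refine Integrable.mono' (((hexp.comp_add_right ((1 - β) • (0 : E))).comp_smul hβ₀.ne').const_mul
    (exp ((1 - β) * g 0))) hmeas (ae_of_all _ fun x => ?_)
  rw [norm_of_nonneg (exp_pos _).le]
  exact hg.exp_neg_mul_le hβ₀.le hβ₁ x 0

lemma ConvexOn.integral_exp_neg_mul_le (hg : ConvexOn ℝ univ g)
    (hexp : Integrable (fun x => exp (-g x)) μ) {β : ℝ} (hβ₀ : 0 < β) (hβ₁ : β ≤ 1) (y : E) :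
    ∫ x, exp (-(β * g x)) ∂μ ≤
      exp ((1 - β) * g y) / β ^ finrank ℝ E * ∫ x, exp (-g x) ∂μ := by
  calc ∫ x, exp (-(β * g x)) ∂μ
      ≤ ∫ x, exp ((1 - β) * g y) * exp (-g (β • x + (1 - β) • y)) ∂μ :=
        integral_mono (hg.integrable_exp_neg_mul hexp hβ₀ hβ₁)
          (((hexp.comp_add_right ((1 - β) • y)).comp_smul hβ₀.ne').const_mul _)
          fun x => hg.exp_neg_mul_le hβ₀.le hβ₁ x y
    _ = exp ((1 - β) * g y) / β ^ finrank ℝ E * ∫ x, exp (-g x) ∂μ := by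
        rw [integral_const_mul, integral_comp_smul_add_of_nonneg μ (fun x => exp (-g x)) hβ₀.le]
        ring

lemma ConvexOn.integral_mul_exp_neg_le (hg : ConvexOn ℝ univ g)
    (hexp : Integrable (fun x => exp (-g x)) μ)
    (hgexp : Integrable (fun x => g x * exp (-g x)) μ) (y : E) :
    ∫ x, g x * exp (-g x) ∂μ ≤ (g y + finrank ℝ E) * ∫ x, exp (-g x) ∂μ := by
  set Z := ∫ x, exp (-g x) ∂μ
  set F := fun β : ℝ => exp ((1 - β) * g y) / β ^ finrank ℝ E * Z
  have hderiv : HasDerivAt F (-(g y + finrank ℝ E) * Z) 1 :=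
    (hasDerivAt_exp_mul_div_pow (g y) (finrank ℝ E)).mul_const Z
  suffices ∀ β ∈ Ioo (0 : ℝ) 1, (∫ x, g x * exp (-g x) ∂μ) * (1 - β) ≤ F β - F 1 by
    have := hderiv.le_neg_of_eventually_mul_sub_le
      (eventually_of_mem (Ioo_mem_nhdsLT zero_lt_one) this)
    linarith
  rintro β ⟨hβ₀, hβ₁⟩
  have hlower : (1 - β) * ∫ x, g x * exp (-g x) ∂μ ≤ ∫ x, exp (-(β * g x)) ∂μ - Z := by
    rw [← integral_const_mul, ← integral_sub (hg.integrable_exp_neg_mul hexp hβ₀ hβ₁.le) hexp]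
    exact integral_mono (hgexp.const_mul _)
      ((hg.integrable_exp_neg_mul hexp hβ₀ hβ₁.le).sub hexp)
      fun x => mul_mul_exp_neg_le_exp_neg_mul_sub_exp_neg β (g x)
  have hupper := hg.integral_exp_neg_mul_le hexp hβ₀ hβ₁.le y
  simp only [F, sub_self, zero_mul, exp_zero, one_pow, div_one, one_mul]
  linarith

end AddHaar

theorem expectation_le_min_add_one_general
    (g : ℝ → ℝ) (hg : ConvexOn ℝ Set.univ g)
    (Z : ℝ) (hZpos : 0 < Z)
    (hZ : Z = ∫ x : ℝ, Real.exp (-g x))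
    (xhat : ℝ)
    (hint : Integrable (fun x : ℝ => g x * (Real.exp (-g x) / Z))) :
    (∫ x : ℝ, g x * (Real.exp (-g x) / Z)) ≤ g xhat + 1 := by
  have hexp : Integrable (fun x => exp (-g x)) := by
    by_contra h
    rw [integral_undef h] at hZ
    linarith
  have hgexp : Integrable (fun x => g x * exp (-g x)) := by
    simpa [mul_div_assoc', div_mul_cancel₀ _ hZpos.ne'] using hint.mul_const Z
  have hbound := hg.integral_mul_exp_neg_le hexp hgexp xhat
  rw [finrank_self, ← hZ, Nat.cast_one] at hbound
  simp_rw [mul_div_assoc', integral_div]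
  rwa [div_le_iff₀ hZpos]

/-- One-dimensional case of the mean bound: for a log-concave probability
density `p = exp(-g)/Z` on ℝ with `g` convex minimized at `x̂`,
`E[g] ≤ g x̂ + 1`. -/
theorem expectation_le_min_add_one
    (g : ℝ → ℝ) (hg : ConvexOn ℝ Set.univ g)
    (Z : ℝ) (hZpos : 0 < Z)
    (hZ : Z = ∫ x : ℝ, Real.exp (-g x))
    (hprob : ∫ x : ℝ, Real.exp (-g x) / Z = 1)
    (xhat : ℝ) (hmin : ∀ x, g xhat ≤ g x)
    (hint : Integrable (fun x : ℝ => g x * (Real.exp (-g x) / Z))) :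
    (∫ x : ℝ, g x * (Real.exp (-g x) / Z)) ≤ g xhat + 1 :=
  expectation_le_min_add_one_general g hg Z hZpos hZ xhat hint
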